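/- arXiv:1206.0196 — 6 statements merged into one kernel-verified Lean document; each statement's English description precedes it below -/
import Mathlib

section
/- Let n ≥ 1 and let L, U : Matrix (Fin n) (Fin n) ℝ be symmetric matrices with L i j ≤ U i j for all i, j. Define the Gershgorin radii r i = ∑_{j ≠ i} max(-(L i j), U i j). Then for every symmetric matrix H : Matrix (Fin n) (Fin n) ℝ with L i j ≤ H i j ≤ U i j for all i, j, every eigenvalue λ of H satisfies λ ≥ min_{i} (L i i - r i). -/
/-- Interval variant of Gershgorin's circle criterion: lower bound. -/
theorem interval_gershgorin_lower
    (n : ℕ) (hn : 0 < n)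
    (L U : Matrix (Fin n) (Fin n) ℝ)
    (hLsymm : L.IsSymm) (hUsymm : U.IsSymm)
    (hLU : ∀ i j, L i j ≤ U i j)
    (H : Matrix (Fin n) (Fin n) ℝ) (hHsymm : H.IsSymm)
    (hHL : ∀ i j, L i j ≤ H i j) (hHU : ∀ i j, H i j ≤ U i j)
    (lam : ℝ) (v : Fin n → ℝ) (hv : v ≠ 0) (hev : H.mulVec v = lam • v) :
    Finset.univ.inf' ⟨⟨0, hn⟩, Finset.mem_univ _⟩
      (fun i => L i i - ∑ j ∈ Finset.univ.erase i, max (-(L i j)) (U i j)) ≤ lam := by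
  have hμ : Module.End.HasEigenvalue (Matrix.toLin' H) lam := by
    refine Module.End.hasEigenvalue_of_hasEigenvector ⟨?_, hv⟩
    rw [Module.End.mem_eigenspace_iff, Matrix.toLin'_apply, hev]
  obtain ⟨k, hk⟩ := eigenvalue_mem_ball hμ
  rw [Metric.mem_closedBall, Real.dist_eq, abs_sub_le_iff] at hk
  have h1 : H k k - ∑ j ∈ Finset.univ.erase k, ‖H k j‖ ≤ lam := by linarith [hk.2]
  refine le_trans (Finset.inf'_le _ (Finset.mem_univ k)) (le_trans ?_ h1)
  have h2 : ∀ j ∈ Finset.univ.erase k, ‖H k j‖ ≤ max (-(L k j)) (U k j) := by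
    intro j _
    rw [Real.norm_eq_abs, abs_le]
    constructor
    · have := max_le_iff.mp (le_refl (max (-(L k j)) (U k j)))
      have h := le_max_left (-(L k j)) (U k j)
      linarith [hHL k j]
    · exact le_trans (hHU k j) (le_max_right _ _)
  have := Finset.sum_le_sum h2
  have hLH := hHL k k
  linarith
end

section
/- Let n ≥ 1 and let L, U : Matrix (Fin n) (Fin n) ℝ be symmetric matrices with L i j ≤ U i j for all i, j. Define the Gershgorin radii r i = ∑_{j ≠ i} max(-(L i j), U i j). Then for every symmetric matrix H : Matrix (Fin n) (Fin n) ℝ with L i j ≤ H i j ≤ U i j for all i, j, every eigenvalue λ of H satisfies λ ≤ max_{i} (U i i + r i). -/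
/-- Interval variant of Gershgorin's circle criterion: upper bound. -/
theorem interval_gershgorin_upper
    (n : ℕ) (hn : 0 < n)
    (L U : Matrix (Fin n) (Fin n) ℝ)
    (hLsymm : L.IsSymm) (hUsymm : U.IsSymm)
    (hLU : ∀ i j, L i j ≤ U i j)
    (H : Matrix (Fin n) (Fin n) ℝ) (hHsymm : H.IsSymm)
    (hHL : ∀ i j, L i j ≤ H i j) (hHU : ∀ i j, H i j ≤ U i j)
    (lam : ℝ) (v : Fin n → ℝ) (hv : v ≠ 0) (hev : H.mulVec v = lam • v) :
    lam ≤ Finset.univ.sup' ⟨⟨0, hn⟩, Finset.mem_univ _⟩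
      (fun i => U i i + ∑ j ∈ Finset.univ.erase i, max (-(L i j)) (U i j)) := by
  have hμ : Module.End.HasEigenvalue (Matrix.toLin' H) lam := by
    apply Module.End.hasEigenvalue_of_hasEigenvector (x := v)
    constructor
    · rw [Module.End.mem_eigenspace_iff]
      simpa [Matrix.toLin'_apply] using hev
    · exact hv
  obtain ⟨i, hi⟩ := eigenvalue_mem_ball hμ
  rw [Metric.mem_closedBall, Real.dist_eq] at hi
  have h1 : lam - H i i ≤ ∑ j ∈ Finset.univ.erase i, ‖H i j‖ :=
    le_trans (le_abs_self _) hi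
  have h2 : ∑ j ∈ Finset.univ.erase i, ‖H i j‖ ≤
      ∑ j ∈ Finset.univ.erase i, max (-(L i j)) (U i j) := by
    apply Finset.sum_le_sum
    intro j _
    rw [Real.norm_eq_abs, abs_le]
    constructor
    · simp only [neg_le]
      exact le_max_of_le_left (by linarith [hHL i j])
    · exact le_max_of_le_right (hHU i j)
  have h3 : lam ≤ U i i + ∑ j ∈ Finset.univ.erase i, max (-(L i j)) (U i j) := by
    have := hHU i i
    linarith
  exact le_trans h3 (Finset.le_sup' (fun i => U i i + ∑ j ∈ Finset.univ.erase i, max (-(L i j)) (U i j)) (Finset.mem_univ i))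
end

section
/- Let n ≥ 1 and let L, U : Matrix (Fin n) (Fin n) ℝ be symmetric matrices with L i j ≤ U i j for all i, j. For a sign vector z : Fin n → ℝ with z i ∈ {-1, 1} for all i, define the vertex matrix L^z by (L^z) i j = L i j if i = j or z i * z j = 1, and (L^z) i j = U i j otherwise. Then for every symmetric matrix H : Matrix (Fin n) (Fin n) ℝ with L i j ≤ H i j ≤ U i j for all i, j, every eigenvalue λ of H satisfies λ ≥ min over all sign vectors z of λ_min(L^z), where λ_min denotes the smallest eigenvalue of a real symmetric matrix. -/
/-- The set of (real) eigenvalues of a real matrix. -/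
def realSpec {n : ℕ} (A : Matrix (Fin n) (Fin n) ℝ) : Set ℝ :=
  {μ | ∃ v : Fin n → ℝ, v ≠ 0 ∧ A.mulVec v = μ • v}

/-- The smallest eigenvalue of a (symmetric) real matrix. -/
noncomputable def lamMin {n : ℕ} (A : Matrix (Fin n) (Fin n) ℝ) : ℝ := sInf (realSpec A)

/-- The Hertz–Rohn vertex matrix `L^z` for a sign vector `z`. -/
noncomputable def vertexL {n : ℕ} (L U : Matrix (Fin n) (Fin n) ℝ) (z : Fin n → ℝ) :
    Matrix (Fin n) (Fin n) ℝ :=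
  Matrix.of fun i j => if i = j ∨ z i * z j = 1 then L i j else U i j

/-!
Let `H v = λ v` with `v ≠ 0` and let `z` be the sign pattern of `v`. The vertex matrix `L^z` takes
the entry of `L` exactly where `v i * v j ≥ 0` and the entry of `U` where `v i * v j ≤ 0`, so
termwise `L^z i j * v i * v j ≤ H i j * v i * v j`, whence `vᵀ L^z v ≤ vᵀ H v = λ ‖v‖²`.
The Rayleigh bound `λ_min(L^z) ‖v‖² ≤ vᵀ L^z v`, which holds because `L^z - λ_min(L^z)` is a
symmetric matrix with nonnegative spectrum and hence positive semidefinite, gives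
`λ_min(L^z) ≤ λ`.
-/

open Matrix

variable {n : ℕ}

theorem realSpec_eq_spectrum (A : Matrix (Fin n) (Fin n) ℝ) : realSpec A = spectrum ℝ A := by
  ext μ
  rw [← spectrum_toLin', ← Module.End.hasEigenvalue_iff_mem_spectrum]
  constructor
  · rintro ⟨v, hv, hAv⟩
    exact Module.End.hasEigenvalue_of_hasEigenvector
      ⟨Module.End.mem_eigenspace_iff.mpr (by simpa using hAv), hv⟩
  · intro hμ
    obtain ⟨v, hv, hv0⟩ := hμ.exists_hasEigenvector
    exact ⟨v, hv0, by simpa using Module.End.mem_eigenspace_iff.mp hv⟩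

theorem lamMin_le_of_mem_realSpec (A : Matrix (Fin n) (Fin n) ℝ) {μ : ℝ} (hμ : μ ∈ realSpec A) :
    lamMin A ≤ μ :=
  csInf_le (by rw [realSpec_eq_spectrum]; exact A.finite_real_spectrum.bddBelow) hμ

theorem lamMin_mul_dotProduct_self_le {A : Matrix (Fin n) (Fin n) ℝ} (hA : A.IsSymm)
    (v : Fin n → ℝ) : lamMin A * (v ⬝ᵥ v) ≤ v ⬝ᵥ (A *ᵥ v) := by
  have hpsd : (A - algebraMap ℝ _ (lamMin A)).PosSemidef := by
    have hHerm : (A - algebraMap ℝ _ (lamMin A)).IsHermitian :=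
      (isHermitian_iff_isSymm.mpr hA).sub ((IsSelfAdjoint.all (lamMin A)).algebraMap _)
    refine posSemidef_iff_isHermitian_and_spectrum_nonneg.mpr ⟨hHerm, ?_⟩
    rw [← spectrum.sub_singleton_eq, ← realSpec_eq_spectrum]
    rintro _ ⟨μ, hμ, _, rfl, rfl⟩
    exact sub_nonneg.mpr (lamMin_le_of_mem_realSpec A hμ)
  simpa only [star_trivial, Algebra.algebraMap_eq_smul_one, sub_mulVec, smul_mulVec, one_mulVec,
    dotProduct_sub, dotProduct_smul, smul_eq_mul, sub_nonneg] using hpsd.dotProduct_mulVec_nonneg v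

theorem lamMin_le_of_dotProduct_mulVec_le {A H : Matrix (Fin n) (Fin n) ℝ} (hA : A.IsSymm)
    {v : Fin n → ℝ} (hv : v ≠ 0) {lam : ℝ} (hHv : H *ᵥ v = lam • v)
    (hAH : v ⬝ᵥ (A *ᵥ v) ≤ v ⬝ᵥ (H *ᵥ v)) : lamMin A ≤ lam := by
  have hvv : 0 < v ⬝ᵥ v := by
    simpa using dotProduct_self_star_pos_iff.mpr hv
  refine le_of_mul_le_mul_right ?_ hvv
  calc lamMin A * (v ⬝ᵥ v) ≤ v ⬝ᵥ (A *ᵥ v) := lamMin_mul_dotProduct_self_le hA v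
    _ ≤ v ⬝ᵥ (H *ᵥ v) := hAH
    _ = lam * (v ⬝ᵥ v) := by rw [hHv, dotProduct_smul, smul_eq_mul]

theorem dotProduct_mulVec_le_of_forall_mul_le {ι : Type*} [Fintype ι] {A B : Matrix ι ι ℝ}
    {v : ι → ℝ} (h : ∀ i j, A i j * (v i * v j) ≤ B i j * (v i * v j)) :
    v ⬝ᵥ (A *ᵥ v) ≤ v ⬝ᵥ (B *ᵥ v) := by
  simp only [dotProduct, mulVec, Finset.mul_sum]
  refine Finset.sum_le_sum fun i _ => Finset.sum_le_sum fun j _ => ?_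
  linarith [h i j]

theorem vertexL_isSymm {L U : Matrix (Fin n) (Fin n) ℝ} (hL : L.IsSymm) (hU : U.IsSymm)
    (z : Fin n → ℝ) : (vertexL L U z).IsSymm := by
  ext i j
  simp only [vertexL, transpose_apply, of_apply, eq_comm (a := j), mul_comm (z j)]
  split_ifs
  · exact hL.apply i j
  · exact hU.apply i j

section SignVec

variable {ι : Type*}

noncomputable def signVec (v : ι → ℝ) : ι → ℝ := fun i => if v i < 0 then -1 else 1

theorem signVec_eq_neg_one_or_eq_one (v : ι → ℝ) (i : ι) :
    signVec v i = -1 ∨ signVec v i = 1 := by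
  unfold signVec; split_ifs <;> simp

theorem mul_nonneg_of_signVec_mul_eq_one {v : ι → ℝ} {i j : ι}
    (h : signVec v i * signVec v j = 1) : 0 ≤ v i * v j := by
  unfold signVec at h; split_ifs at h <;> nlinarith

theorem mul_nonpos_of_signVec_mul_ne_one {v : ι → ℝ} {i j : ι}
    (h : signVec v i * signVec v j ≠ 1) : v i * v j ≤ 0 := by
  unfold signVec at h; split_ifs at h <;> norm_num at h <;> nlinarith

end SignVec

theorem dotProduct_vertexL_signVec_le {L U H : Matrix (Fin n) (Fin n) ℝ}
    (hHL : ∀ i j, L i j ≤ H i j) (hHU : ∀ i j, H i j ≤ U i j) (v : Fin n → ℝ) :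
    v ⬝ᵥ (vertexL L U (signVec v) *ᵥ v) ≤ v ⬝ᵥ (H *ᵥ v) := by
  refine dotProduct_mulVec_le_of_forall_mul_le fun i j => ?_
  simp only [vertexL, of_apply]
  split_ifs with h
  · refine mul_le_mul_of_nonneg_right (hHL i j) ?_
    rcases h with rfl | h
    · exact mul_self_nonneg _
    · exact mul_nonneg_of_signVec_mul_eq_one h
  · exact mul_le_mul_of_nonpos_right (hHU i j) (mul_nonpos_of_signVec_mul_ne_one (not_or.mp h).2)

theorem finite_setOf_forall_eq_neg_one_or_eq_one (ι : Type*) [Finite ι] :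
    {z : ι → ℝ | ∀ i, z i = -1 ∨ z i = 1}.Finite := by
  convert Set.Finite.pi (t := fun _ : ι => ({-1, 1} : Set ℝ)) fun _ => Set.toFinite _
  ext z
  simp

theorem hertz_rohn_lower_valid_general
    (n : ℕ)
    (L U : Matrix (Fin n) (Fin n) ℝ)
    (hLsymm : L.IsSymm) (hUsymm : U.IsSymm)
    (H : Matrix (Fin n) (Fin n) ℝ)
    (hHL : ∀ i j, L i j ≤ H i j) (hHU : ∀ i j, H i j ≤ U i j)
    (lam : ℝ) (hlam : lam ∈ realSpec H) :
    sInf {m : ℝ | ∃ z : Fin n → ℝ, (∀ i, z i = -1 ∨ z i = 1) ∧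
      m = lamMin (vertexL L U z)} ≤ lam := by
  obtain ⟨v, hv, hHv⟩ := hlam
  have hbdd : BddBelow {m : ℝ | ∃ z : Fin n → ℝ, (∀ i, z i = -1 ∨ z i = 1) ∧
      m = lamMin (vertexL L U z)} := by
    refine (((finite_setOf_forall_eq_neg_one_or_eq_one (Fin n)).image
      fun z => lamMin (vertexL L U z)).subset ?_).bddBelow
    rintro _ ⟨z, hz, rfl⟩
    exact ⟨z, hz, rfl⟩
  calc _ ≤ lamMin (vertexL L U (signVec v)) :=
        csInf_le hbdd ⟨signVec v, signVec_eq_neg_one_or_eq_one v, rfl⟩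
    _ ≤ lam := lamMin_le_of_dotProduct_mulVec_le (vertexL_isSymm hLsymm hUsymm _) hv hHv
        (dotProduct_vertexL_signVec_le hHL hHU v)

/-- Hertz and Rohn's method: validity of the lower eigenvalue bound. -/
theorem hertz_rohn_lower_valid
    (n : ℕ) (hn : 0 < n)
    (L U : Matrix (Fin n) (Fin n) ℝ)
    (hLsymm : L.IsSymm) (hUsymm : U.IsSymm)
    (hLU : ∀ i j, L i j ≤ U i j)
    (H : Matrix (Fin n) (Fin n) ℝ) (hHsymm : H.IsSymm)
    (hHL : ∀ i j, L i j ≤ H i j) (hHU : ∀ i j, H i j ≤ U i j)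
    (lam : ℝ) (hlam : lam ∈ realSpec H) :
    sInf {m : ℝ | ∃ z : Fin n → ℝ, (∀ i, z i = -1 ∨ z i = 1) ∧
      m = lamMin (vertexL L U z)} ≤ lam :=
  hertz_rohn_lower_valid_general n L U hLsymm hUsymm H hHL hHU lam hlam
end

section
/- Let n ≥ 1, let x̲, x̄ : Fin n → ℝ with x̲ i ≤ x̄ i for all i, and let B = {x : Fin n → ℝ | ∀ i, x̲ i ≤ x i ≤ x̄ i} be the corresponding hyperrectangle. Let φ : (Fin n → ℝ) → ℝ be twice continuously differentiable on an open set D containing B, and let λ̲ ∈ ℝ be such that for every x ∈ B, every eigenvalue of the Hessian matrix ∇²φ(x) (the symmetric n×n matrix of second partial derivatives of φ at x) is ≥ λ̲. Then the function φ̆(x) = φ(x) - (1/2) * λ̲ * ∑_{i} (x̲ i - x i) * (x̄ i - x i) is convex on B. -/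
/-!
Each summand `(x̲ᵢ - xᵢ)(x̄ᵢ - xᵢ)` has second derivative `2` in `xᵢ`, so the added term has
constant Hessian `-λ̲ I` and `∇²φ̆ = ∇²φ - λ̲ I`. Since every eigenvalue of the symmetric matrix
`∇²φ(x)` is at least `λ̲`, this is positive semidefinite on `B`. A `C²` function with positive
semidefinite Hessian on a convex set is convex there: on every segment it restricts to a function
of one variable with nonnegative second derivative.
-/

/-- The Hessian matrix of `f` at `x`: entries are the second partial derivatives of `f`,
expressed via the second iterated Fréchet derivative in coordinate directions. -/
noncomputable def hess {n : ℕ} (f : (Fin n → ℝ) → ℝ) (x : Fin n → ℝ) :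
    Matrix (Fin n) (Fin n) ℝ :=
  Matrix.of fun i j => iteratedFDeriv ℝ 2 f x ![Pi.single i 1, Pi.single j 1]

open Matrix Set AffineMap

theorem Matrix.IsHermitian.posSemidef_sub_smul_one {ι : Type*} [Fintype ι] [DecidableEq ι]
    {A : Matrix ι ι ℝ} (hA : A.IsHermitian) {c : ℝ}
    (hc : ∀ μ : ℝ, ∀ v : ι → ℝ, v ≠ 0 → A *ᵥ v = μ • v → c ≤ μ) : (A - c • 1).PosSemidef := by
  have hAc : (A - c • 1).IsHermitian := hA.sub (isHermitian_one.smul (.all c))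
  rw [hAc.posSemidef_iff_eigenvalues_nonneg]
  intro i
  have hv : ⇑(hAc.eigenvectorBasis i) ≠ 0 := fun h =>
    hAc.eigenvectorBasis.orthonormal.ne_zero i (by ext j; exact congrFun h j)
  have hAv : A *ᵥ ⇑(hAc.eigenvectorBasis i) =
      (hAc.eigenvalues i + c) • ⇑(hAc.eigenvectorBasis i) := by
    have := hAc.mulVec_eigenvectorBasis i
    rw [sub_mulVec, smul_mulVec, one_mulVec, sub_eq_iff_eq_add] at this
    rw [this, add_smul]
  simpa using hc _ _ hv hAv

theorem convexOn_of_forall_convexOn_comp_lineMap {E : Type*} [AddCommGroup E] [Module ℝ E]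
    {S : Set E} {f : E → ℝ} (hS : Convex ℝ S)
    (h : ∀ x ∈ S, ∀ y ∈ S, ConvexOn ℝ (Icc (0 : ℝ) 1) (f ∘ lineMap x y)) : ConvexOn ℝ S f := by
  refine ⟨hS, fun x hx y hy a b ha hb hab => ?_⟩
  have := (h x hx y hy).2 (left_mem_Icc.2 zero_le_one) (right_mem_Icc.2 zero_le_one) ha hb hab
  have hcomb : a • (0 : ℝ) + b • (1 : ℝ) = b := by simp
  have hxy : lineMap x y b = a • x + b • y := by
    rw [lineMap_apply_module, ← hab, add_sub_cancel_right]
  simpa [hcomb, hxy] using this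

section

variable {E : Type*} [NormedAddCommGroup E] [NormedSpace ℝ E] {f : E → ℝ} {D S : Set E}

theorem convexOn_of_iteratedFDeriv_two_nonneg (hD : IsOpen D) (hS : Convex ℝ S) (hSD : S ⊆ D)
    (hf : ContDiffOn ℝ 2 f D) (hf₂ : ∀ z ∈ S, ∀ v, 0 ≤ iteratedFDeriv ℝ 2 f z ![v, v]) :
    ConvexOn ℝ S f := by
  refine convexOn_of_forall_convexOn_comp_lineMap hS fun x hx y hy => ?_
  have hmem : MapsTo (lineMap x y) (Icc (0 : ℝ) 1) S := hS.mapsTo_lineMap hx hy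
  have hf_at (t : ℝ) (ht : t ∈ Icc (0 : ℝ) 1) : ContDiffAt ℝ 2 f (lineMap x y t) :=
    hf.contDiffAt (hD.mem_nhds (hSD (hmem ht)))
  have hderiv (t : ℝ) (ht : t ∈ Icc (0 : ℝ) 1) :
      HasDerivAt (f ∘ lineMap x y) (fderiv ℝ f (lineMap x y t) (y - x)) t :=
    ((hf_at t ht).differentiableAt two_ne_zero).hasFDerivAt.comp_hasDerivAt t hasDerivAt_lineMap
  have hderiv₂ (t : ℝ) (ht : t ∈ Icc (0 : ℝ) 1) :
      HasDerivAt (fun s => fderiv ℝ f (lineMap x y s) (y - x))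
        (fderiv ℝ (fderiv ℝ f) (lineMap x y t) (y - x) (y - x)) t := by
    simpa using ((((hf_at t ht).fderiv_right one_add_one_eq_two.le).differentiableAt
      one_ne_zero).hasFDerivAt.comp_hasDerivAt t hasDerivAt_lineMap).clm_apply
        (hasDerivAt_const t (y - x))
  refine convexOn_of_hasDerivWithinAt2_nonneg (convex_Icc 0 1)
    (hf.continuousOn.comp (lineMap_continuous (R := ℝ)).continuousOn (hmem.mono_right hSD))
    (fun t ht => (hderiv t (interior_subset ht)).hasDerivWithinAt)
    (fun t ht => (hderiv₂ t (interior_subset ht)).hasDerivWithinAt) fun t ht => ?_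
  simpa [iteratedFDeriv_two_apply] using hf₂ _ (hmem (interior_subset ht)) (y - x)

end

section

variable {n : ℕ}

theorem iteratedFDeriv_two_eq_dotProduct_hess_mulVec (f : (Fin n → ℝ) → ℝ) (z v w : Fin n → ℝ) :
    iteratedFDeriv ℝ 2 f z ![v, w] = v ⬝ᵥ hess f z *ᵥ w := by
  have : hess f z = LinearMap.toMatrix₂' ℝ (fderiv ℝ (fderiv ℝ f) z).toLinearMap₁₂ := by
    ext i j
    simp [hess, iteratedFDeriv_two_apply]
  rw [this, ← Matrix.toLinearMap₂'_apply', Matrix.toLinearMap₂'_toMatrix', iteratedFDeriv_two_apply]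
  simp

theorem hess_isHermitian {f : (Fin n → ℝ) → ℝ} {z : Fin n → ℝ} (hf : ContDiffAt ℝ 2 f z) :
    (hess f z).IsHermitian := by
  ext i j
  simpa [hess, iteratedFDeriv_two_apply] using (hf.isSymmSndFDerivAt (by simp) _ _).symm

theorem hess_sub_const_mul {f g : (Fin n → ℝ) → ℝ} {z : Fin n → ℝ} (hf : ContDiffAt ℝ 2 f z)
    (hg : ContDiffAt ℝ 2 g z) (c : ℝ) :
    hess (fun x => f x - c * g x) z = hess f z - c • hess g z := by
  have hcg : ContDiffAt ℝ 2 (fun x => c * g x) z := contDiffAt_const.mul hg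
  have hsmul : iteratedFDeriv ℝ 2 (fun x => c • g x) z = c • iteratedFDeriv ℝ 2 g z :=
    iteratedFDeriv_const_smul_apply' hg
  ext i j
  simp only [hess, of_apply, Matrix.sub_apply, Matrix.smul_apply]
  rw [fun_iteratedFDeriv_sub_apply hf hcg]
  simp only [← smul_eq_mul (a := c), hsmul]
  rfl

local notation "π" i => ContinuousLinearMap.proj (R := ℝ) (φ := fun _ : Fin n => ℝ) i

theorem hasFDerivAt_sum_sub_mul_sub (a b x : Fin n → ℝ) :
    HasFDerivAt (fun x : Fin n → ℝ => ∑ i, (a i - x i) * (b i - x i))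
      (∑ i, (2 * x i - a i - b i) • π i) x := by
  have hπ (i : Fin n) : HasFDerivAt (fun x : Fin n → ℝ => x i) (π i) x := hasFDerivAt_apply i x
  refine (HasFDerivAt.fun_sum fun i _ =>
    ((hπ i).const_sub (a i)).mul ((hπ i).const_sub (b i))).congr_fderiv ?_
  ext v
  simpa using Finset.sum_congr rfl fun i _ => by ring

theorem hess_sum_sub_mul_sub (a b z : Fin n → ℝ) :
    hess (fun x => ∑ i, (a i - x i) * (b i - x i)) z = (2 : ℝ) • 1 := by
  have hπ (i : Fin n) : HasFDerivAt (fun x : Fin n → ℝ => x i) (π i) z := hasFDerivAt_apply i z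
  have hD2 : HasFDerivAt (fun x : Fin n → ℝ => ∑ i, (2 * x i - a i - b i) • π i)
      (∑ i, ((2 : ℝ) • π i).smulRight (π i)) z :=
    HasFDerivAt.fun_sum fun i _ =>
      ((((hπ i).const_mul 2).sub_const (a i)).sub_const (b i)).smul_const (π i)
  ext i j
  simp [hess, iteratedFDeriv_two_apply, funext fun x => (hasFDerivAt_sum_sub_mul_sub a b x).fderiv,
    hD2.fderiv, Pi.single_apply, one_apply, eq_comm]

theorem convexOn_of_hess_posSemidef {f : (Fin n → ℝ) → ℝ} {D S : Set (Fin n → ℝ)}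
    (hD : IsOpen D) (hS : Convex ℝ S) (hSD : S ⊆ D) (hf : ContDiffOn ℝ 2 f D)
    (hpsd : ∀ z ∈ S, (hess f z).PosSemidef) : ConvexOn ℝ S f :=
  convexOn_of_iteratedFDeriv_two_nonneg hD hS hSD hf fun z hz v => by
    simpa [iteratedFDeriv_two_eq_dotProduct_hess_mulVec] using (hpsd z hz).dotProduct_mulVec_nonneg v

end

theorem alphaBB_convex_general
    (n : ℕ)
    (xl xu : Fin n → ℝ)
    (D : Set (Fin n → ℝ)) (hD : IsOpen D)
    (hBD : {x : Fin n → ℝ | ∀ i, xl i ≤ x i ∧ x i ≤ xu i} ⊆ D)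
    (φ : (Fin n → ℝ) → ℝ) (hφ : ContDiffOn ℝ 2 φ D)
    (lam : ℝ)
    (hlam : ∀ x ∈ {x : Fin n → ℝ | ∀ i, xl i ≤ x i ∧ x i ≤ xu i},
      ∀ μ : ℝ, ∀ v : Fin n → ℝ, v ≠ 0 → (hess φ x).mulVec v = μ • v → lam ≤ μ) :
    ConvexOn ℝ {x : Fin n → ℝ | ∀ i, xl i ≤ x i ∧ x i ≤ xu i}
      (fun x => φ x - (1 / 2 : ℝ) * lam * ∑ i, (xl i - x i) * (xu i - x i)) := by
  have hB : {x : Fin n → ℝ | ∀ i, xl i ≤ x i ∧ x i ≤ xu i} = Icc xl xu := by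
    ext x
    simp [Pi.le_def, forall_and]
  have hq : ContDiff ℝ 2 fun x : Fin n → ℝ => ∑ i, (xl i - x i) * (xu i - x i) := by fun_prop
  refine convexOn_of_hess_posSemidef hD (hB ▸ convex_Icc xl xu) hBD
    (hφ.sub (contDiffOn_const.mul hq.contDiffOn)) fun z hz => ?_
  have hφz : ContDiffAt ℝ 2 φ z := hφ.contDiffAt (hD.mem_nhds (hBD hz))
  rw [hess_sub_const_mul hφz hq.contDiffAt, hess_sum_sub_mul_sub]
  convert (hess_isHermitian hφz).posSemidef_sub_smul_one (hlam z hz) using 2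
  rw [smul_smul]
  ring_nf

/-- Convexity of the αBB underestimator on a hyperrectangle. -/
theorem alphaBB_convex
    (n : ℕ) (hn : 0 < n)
    (xl xu : Fin n → ℝ) (hx : ∀ i, xl i ≤ xu i)
    (D : Set (Fin n → ℝ)) (hD : IsOpen D)
    (hBD : {x : Fin n → ℝ | ∀ i, xl i ≤ x i ∧ x i ≤ xu i} ⊆ D)
    (φ : (Fin n → ℝ) → ℝ) (hφ : ContDiffOn ℝ 2 φ D)
    (lam : ℝ)
    (hlam : ∀ x ∈ {x : Fin n → ℝ | ∀ i, xl i ≤ x i ∧ x i ≤ xu i},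
      ∀ μ : ℝ, ∀ v : Fin n → ℝ, v ≠ 0 → (hess φ x).mulVec v = μ • v → lam ≤ μ) :
    ConvexOn ℝ {x : Fin n → ℝ | ∀ i, xl i ≤ x i ∧ x i ≤ xu i}
      (fun x => φ x - (1 / 2 : ℝ) * lam * ∑ i, (xl i - x i) * (xu i - x i)) :=
  alphaBB_convex_general n xl xu D hD hBD φ hφ lam hlam
end

section
/- Let n ≥ 1 and let a̲, ā, b̲, b̄ : Fin n → ℝ with a̲ i ≤ ā i and b̲ i ≤ b̄ i for all i. Set β = √( (∑_i max((a̲ i)², (ā i)²)) * (∑_i max((b̲ i)², (b̄ i)²)) ). Then for all vectors a, b : Fin n → ℝ with a̲ i ≤ a i ≤ ā i and b̲ i ≤ b i ≤ b̄ i for all i, every eigenvalue λ of a bᵀ + b aᵀ satisfies ∑_i min(a̲ i * b̲ i, a̲ i * b̄ i, ā i * b̲ i, ā i * b̄ i) - β ≤ λ ≤ ∑_i max(a̲ i * b̲ i, a̲ i * b̄ i, ā i * b̲ i, ā i * b̄ i) + β. -/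
private lemma mul_le_max4 {al au bl bu x y : ℝ} (h1 : al ≤ x) (h2 : x ≤ au)
    (h3 : bl ≤ y) (h4 : y ≤ bu) :
    x * y ≤ max (max (al * bl) (al * bu)) (max (au * bl) (au * bu)) := by
  rcases le_total 0 x with hx | hx
  · have hx1 : x * y ≤ x * bu := mul_le_mul_of_nonneg_left h4 hx
    rcases le_total 0 bu with hbu | hbu
    · have : x * bu ≤ au * bu := mul_le_mul_of_nonneg_right h2 hbu
      exact le_trans (le_trans hx1 this) (le_max_of_le_right (le_max_right _ _))
    · have : x * bu ≤ al * bu := mul_le_mul_of_nonpos_right h1 hbu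
      exact le_trans (le_trans hx1 this) (le_max_of_le_left (le_max_right _ _))
  · have hx1 : x * y ≤ x * bl := mul_le_mul_of_nonpos_left h3 hx
    rcases le_total 0 bl with hbl | hbl
    · have : x * bl ≤ au * bl := mul_le_mul_of_nonneg_right h2 hbl
      exact le_trans (le_trans hx1 this) (le_max_of_le_right (le_max_left _ _))
    · have : x * bl ≤ al * bl := mul_le_mul_of_nonpos_right h1 hbl
      exact le_trans (le_trans hx1 this) (le_max_of_le_left (le_max_left _ _))

private lemma min4_le_mul {al au bl bu x y : ℝ} (h1 : al ≤ x) (h2 : x ≤ au)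
    (h3 : bl ≤ y) (h4 : y ≤ bu) :
    min (min (al * bl) (al * bu)) (min (au * bl) (au * bu)) ≤ x * y := by
  rcases le_total 0 x with hx | hx
  · have hx1 : x * bl ≤ x * y := mul_le_mul_of_nonneg_left h3 hx
    rcases le_total 0 bl with hbl | hbl
    · have : al * bl ≤ x * bl := mul_le_mul_of_nonneg_right h1 hbl
      exact le_trans (min_le_of_left_le (min_le_left _ _)) (le_trans this hx1)
    · have : au * bl ≤ x * bl := mul_le_mul_of_nonpos_right h2 hbl
      exact le_trans (min_le_of_right_le (min_le_left _ _)) (le_trans this hx1)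
  · have hx1 : x * bu ≤ x * y := mul_le_mul_of_nonpos_left h4 hx
    rcases le_total 0 bu with hbu | hbu
    · have : al * bu ≤ x * bu := mul_le_mul_of_nonneg_right h1 hbu
      exact le_trans (min_le_of_left_le (min_le_right _ _)) (le_trans this hx1)
    · have : au * bu ≤ x * bu := mul_le_mul_of_nonpos_right h2 hbu
      exact le_trans (min_le_of_right_le (min_le_right _ _)) (le_trans this hx1)

/-- key Rayleigh-type inequality -/
private lemma key_ineq (n : ℕ) (a b v : Fin n → ℝ) :
    2 * (∑ i, a i * v i) * (∑ i, b i * v i) ≤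
      ((∑ i, a i * b i) + Real.sqrt (∑ i, a i ^ 2) * Real.sqrt (∑ i, b i ^ 2))
        * (∑ i, v i ^ 2) := by
  set A := ∑ i, a i ^ 2 with hA
  set B := ∑ i, b i ^ 2 with hB
  have hA0 : 0 ≤ A := Finset.sum_nonneg fun i _ => sq_nonneg _
  have hB0 : 0 ≤ B := Finset.sum_nonneg fun i _ => sq_nonneg _
  set α := Real.sqrt A with hα
  set β := Real.sqrt B with hβ
  have hα0 : 0 ≤ α := Real.sqrt_nonneg _
  have hβ0 : 0 ≤ β := Real.sqrt_nonneg _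
  have hα2 : α ^ 2 = A := Real.sq_sqrt hA0
  have hβ2 : β ^ 2 = B := Real.sq_sqrt hB0
  have hV : 0 ≤ ∑ i, v i ^ 2 := Finset.sum_nonneg fun i _ => sq_nonneg _
  rcases eq_or_lt_of_le (mul_nonneg hα0 hβ0) with h0 | hpos
  · -- α * β = 0 : then a = 0 or b = 0
    have hcase : A = 0 ∨ B = 0 := by
      rcases mul_eq_zero.mp h0.symm with h | h
      · left; rw [← hα2, h]; ring
      · right; rw [← hβ2, h]; ring
    rcases hcase with h | h
    · have h' : (∑ i, a i ^ 2) = 0 := by rw [← hA]; exact h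
      have ha0' : ∀ i, a i = 0 := fun i => sq_eq_zero_iff.mp <|
        (Finset.sum_eq_zero_iff_of_nonneg (fun i _ => sq_nonneg (a i))).mp h' i
          (Finset.mem_univ i)
      have hs : (∑ i, a i * v i) = 0 := by simp [ha0']
      have hd : (∑ i, a i * b i) = 0 := by simp [ha0']
      rw [hs, hd, ← h0]; simp
    · have h' : (∑ i, b i ^ 2) = 0 := by rw [← hB]; exact h
      have hb0' : ∀ i, b i = 0 := fun i => sq_eq_zero_iff.mp <|
        (Finset.sum_eq_zero_iff_of_nonneg (fun i _ => sq_nonneg (b i))).mp h' i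
          (Finset.mem_univ i)
      have hs : (∑ i, b i * v i) = 0 := by simp [hb0']
      have hd : (∑ i, a i * b i) = 0 := by simp [hb0']
      rw [hs, hd, ← h0]; simp
  · -- Cauchy-Schwarz on (β • a + α • b) and v
    have cs := Finset.sum_mul_sq_le_sq_mul_sq Finset.univ (fun i => β * a i + α * b i) v
    have e1 : (∑ i, (β * a i + α * b i) * v i)
        = β * (∑ i, a i * v i) + α * (∑ i, b i * v i) := by
      rw [Finset.mul_sum, Finset.mul_sum, ← Finset.sum_add_distrib]
      exact Finset.sum_congr rfl fun i _ => by ring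
    have e2 : (∑ i, (β * a i + α * b i) ^ 2)
        = β ^ 2 * A + 2 * α * β * (∑ i, a i * b i) + α ^ 2 * B := by
      rw [hA, hB, Finset.mul_sum, Finset.mul_sum, Finset.mul_sum,
        ← Finset.sum_add_distrib, ← Finset.sum_add_distrib]
      exact Finset.sum_congr rfl fun i _ => by ring
    rw [e1, e2] at cs
    have hAB : β ^ 2 * A + 2 * α * β * (∑ i, a i * b i) + α ^ 2 * B
        = 2 * (α * β) * ((∑ i, a i * b i) + α * β) := by
      rw [hα2, hβ2]; ring_nf; nlinarith [hα2, hβ2]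
    rw [hAB] at cs
    have expand : (β * (∑ i, a i * v i) + α * (∑ i, b i * v i)) ^ 2
        = β ^ 2 * (∑ i, a i * v i) ^ 2 + α ^ 2 * (∑ i, b i * v i) ^ 2
          + 2 * (α * β) * ((∑ i, a i * v i) * (∑ i, b i * v i)) := by ring
    rw [expand] at cs
    nlinarith [sq_nonneg (β * (∑ i, a i * v i) - α * (∑ i, b i * v i)), cs,
      mul_pos hpos hpos, mul_nonneg (le_of_lt hpos) hV]

private lemma sq_le_max_sq {al au x : ℝ} (h1 : al ≤ x) (h2 : x ≤ au) :
    x ^ 2 ≤ max (al ^ 2) (au ^ 2) := by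
  rcases le_total 0 x with h | h
  · exact le_max_of_le_right (by nlinarith)
  · exact le_max_of_le_left (by nlinarith)

/-- Correctness of the interval bound `λ_{ab}([a],[b]) = [-β, β] + ∑ i [a̲ i, ā i]·[b̲ i, b̄ i]`. -/
theorem outer_sym_eigenvalue_bounds
    (n : ℕ) (hn : 0 < n)
    (al au bl bu : Fin n → ℝ)
    (ha' : ∀ i, al i ≤ au i) (hb' : ∀ i, bl i ≤ bu i)
    (a b : Fin n → ℝ)
    (ha : ∀ i, al i ≤ a i ∧ a i ≤ au i) (hb : ∀ i, bl i ≤ b i ∧ b i ≤ bu i)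
    (μ : ℝ) (v : Fin n → ℝ) (hv : v ≠ 0)
    (hev : (Matrix.of fun i j => a i * b j + b i * a j).mulVec v = μ • v) :
    (∑ i, min (min (al i * bl i) (al i * bu i)) (min (au i * bl i) (au i * bu i)))
      - Real.sqrt ((∑ i, max ((al i) ^ 2) ((au i) ^ 2)) *
          (∑ i, max ((bl i) ^ 2) ((bu i) ^ 2))) ≤ μ ∧
    μ ≤ (∑ i, max (max (al i * bl i) (al i * bu i)) (max (au i * bl i) (au i * bu i)))
      + Real.sqrt ((∑ i, max ((al i) ^ 2) ((au i) ^ 2)) *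
          (∑ i, max ((bl i) ^ 2) ((bu i) ^ 2))) := by
  set S := ∑ i, a i * v i with hS
  set T := ∑ i, b i * v i with hT
  set V := ∑ i, v i ^ 2 with hV
  set D := ∑ i, a i * b i with hD
  set A := ∑ i, a i ^ 2 with hA
  set B := ∑ i, b i ^ 2 with hB
  have hA0 : 0 ≤ A := Finset.sum_nonneg fun i _ => sq_nonneg _
  have hB0 : 0 ≤ B := Finset.sum_nonneg fun i _ => sq_nonneg _
  -- V > 0
  have hVpos : 0 < V := by
    obtain ⟨i, hi⟩ := Function.ne_iff.mp hv
    exact Finset.sum_pos' (fun j _ => sq_nonneg _)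
      ⟨i, Finset.mem_univ i, lt_of_le_of_ne (sq_nonneg _) (Ne.symm (pow_ne_zero 2 hi))⟩
  -- eigen-equation in coordinates
  have hev' : ∀ i, (∑ j, (a i * b j + b i * a j) * v j) = μ * v i := by
    intro i
    have := congrFun hev i
    simpa [Matrix.mulVec, dotProduct] using this
  have hmain : μ * V = 2 * S * T := by
    calc μ * V = ∑ i, v i * (μ * v i) := by
          rw [hV, Finset.mul_sum]; exact Finset.sum_congr rfl fun i _ => by ring
      _ = ∑ i, v i * (a i * T + b i * S) := by
          refine Finset.sum_congr rfl fun i _ => ?_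
          rw [← hev' i]
          congr 1
          rw [hT, hS, Finset.mul_sum, Finset.mul_sum, ← Finset.sum_add_distrib]
          exact Finset.sum_congr rfl fun j _ => by ring
      _ = (∑ i, a i * v i) * T + (∑ i, b i * v i) * S := by
          rw [Finset.sum_mul, Finset.sum_mul, ← Finset.sum_add_distrib]
          exact Finset.sum_congr rfl fun i _ => by ring
      _ = 2 * S * T := by rw [← hS, ← hT]; ring
  -- key inequalities
  have hup : μ ≤ D + Real.sqrt A * Real.sqrt B := by
    have k := key_ineq n a b v
    rw [← hS, ← hT, ← hV, ← hD, ← hA, ← hB, ← hmain] at k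
    exact le_of_mul_le_mul_right (by linarith [k]) hVpos
  have hlo : D - Real.sqrt A * Real.sqrt B ≤ μ := by
    have k := key_ineq n a (fun i => -b i) v
    have e1 : (∑ i, a i * -b i) = -D := by
      rw [hD, ← Finset.sum_neg_distrib]; exact Finset.sum_congr rfl fun i _ => by ring
    have e2 : (∑ i, (-b i) * v i) = -T := by
      rw [hT, ← Finset.sum_neg_distrib]; exact Finset.sum_congr rfl fun i _ => by ring
    have e3 : (∑ i, (-b i) ^ 2) = B := by
      rw [hB]; exact Finset.sum_congr rfl fun i _ => by ring
    simp only [e1, e2, e3] at k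
    rw [← hS, ← hV, ← hA] at k
    have : (-(2 * S * T)) ≤ (-D + Real.sqrt A * Real.sqrt B) * V := by linarith [k]
    rw [← hmain] at this
    nlinarith [this, hVpos]
  -- bounding D and sqrt A * sqrt B
  have hDub : D ≤ ∑ i, max (max (al i * bl i) (al i * bu i)) (max (au i * bl i) (au i * bu i)) := by
    rw [hD]
    exact Finset.sum_le_sum fun i _ =>
      mul_le_max4 (ha i).1 (ha i).2 (hb i).1 (hb i).2
  have hDlb : (∑ i, min (min (al i * bl i) (al i * bu i)) (min (au i * bl i) (au i * bu i))) ≤ D := by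
    rw [hD]
    exact Finset.sum_le_sum fun i _ =>
      min4_le_mul (ha i).1 (ha i).2 (hb i).1 (hb i).2
  have hsq : Real.sqrt A * Real.sqrt B ≤
      Real.sqrt ((∑ i, max ((al i) ^ 2) ((au i) ^ 2)) * (∑ i, max ((bl i) ^ 2) ((bu i) ^ 2))) := by
    rw [← Real.sqrt_mul hA0 B]
    apply Real.sqrt_le_sqrt
    have hAA : A ≤ ∑ i, max ((al i) ^ 2) ((au i) ^ 2) := by
      rw [hA]; exact Finset.sum_le_sum fun i _ => sq_le_max_sq (ha i).1 (ha i).2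
    have hBB : B ≤ ∑ i, max ((bl i) ^ 2) ((bu i) ^ 2) := by
      rw [hB]; exact Finset.sum_le_sum fun i _ => sq_le_max_sq (hb i).1 (hb i).2
    exact mul_le_mul hAA hBB hB0 (le_trans hA0 hAA)
  constructor
  · linarith [hlo, hDlb, hsq]
  · linarith [hup, hDub, hsq]
end

section
/- Let n ≥ 1, let M : Matrix (Fin n) (Fin n) ℝ be a symmetric matrix all of whose eigenvalues lie in [μ̲, μ̄], and let g̲, ḡ, g : Fin n → ℝ satisfy g̲ i ≤ g i ≤ ḡ i for all i. Then every eigenvalue λ of the symmetric matrix g gᵀ + M satisfies μ̲ ≤ λ ≤ ∑_i max((g̲ i)², (ḡ i)²) + μ̄. -/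
/-!
Rayleigh quotients: if `A v = λ v` with `v ≠ 0` then `λ = vᵀAv / vᵀv`, and the quotient is additive
in `A`. For symmetric `M` it lies in `[μ̲, μ̄]` (shift `M` by `μ̲` and use that a symmetric matrix
with nonnegative eigenvalues is positive semidefinite). For `g gᵀ` it equals `(g ⬝ v)² / vᵀv`,
which lies between `0` and `gᵀg ≤ ∑ max(g̲ᵢ², ḡᵢ²)` by Cauchy–Schwarz.
-/

open Matrix

namespace Matrix

variable {ι : Type*} [Fintype ι]

lemma dotProduct_sq_le_dotProduct_self_mul_dotProduct_self {R : Type*} [CommRing R] [LinearOrder R]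
    [IsStrictOrderedRing R] (u v : ι → R) : (u ⬝ᵥ v) ^ 2 ≤ (u ⬝ᵥ u) * (v ⬝ᵥ v) := by
  simpa only [dotProduct, sq] using Finset.sum_mul_sq_le_sq_mul_sq Finset.univ u v

lemma dotProduct_vecMulVec_self_mulVec {R : Type*} [CommSemiring R] (g v : ι → R) :
    v ⬝ᵥ vecMulVec g g *ᵥ v = (g ⬝ᵥ v) ^ 2 := by
  rw [vecMulVec_mulVec, op_smul_eq_smul, dotProduct_smul, smul_eq_mul, dotProduct_comm, sq]

lemma dotProduct_mulVec_of_mulVec_eq_smul {R : Type*} [CommSemiring R] {A : Matrix ι ι R}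
    {lam : R} {v : ι → R} (hev : A *ᵥ v = lam • v) : v ⬝ᵥ A *ᵥ v = lam * (v ⬝ᵥ v) := by
  rw [hev, dotProduct_smul, smul_eq_mul]

variable [DecidableEq ι] {A : Matrix ι ι ℝ}

lemma IsHermitian.posSemidef_of_eigenvalue_nonneg (hA : A.IsHermitian)
    (h : ∀ μ : ℝ, ∀ w : ι → ℝ, w ≠ 0 → A *ᵥ w = μ • w → 0 ≤ μ) : A.PosSemidef := by
  rw [hA.posSemidef_iff_eigenvalues_nonneg]
  intro i
  exact h _ _ ((WithLp.ofLp_eq_zero 2).ne.2 <| hA.eigenvectorBasis.orthonormal.ne_zero i)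
    (hA.mulVec_eigenvectorBasis i)

lemma IsHermitian.mul_dotProduct_self_le_dotProduct_mulVec (hA : A.IsHermitian) {c : ℝ}
    (h : ∀ μ : ℝ, ∀ w : ι → ℝ, w ≠ 0 → A *ᵥ w = μ • w → c ≤ μ) (v : ι → ℝ) :
    c * (v ⬝ᵥ v) ≤ v ⬝ᵥ A *ᵥ v := by
  have hpsd : (A - c • 1).PosSemidef := by
    refine (hA.sub (isHermitian_one.smul (IsSelfAdjoint.all c))).posSemidef_of_eigenvalue_nonneg
      fun μ w hw hμ => ?_
    have : A *ᵥ w = (μ + c) • w := by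
      rw [sub_mulVec, smul_mulVec, one_mulVec, sub_eq_iff_eq_add] at hμ
      rw [hμ, add_smul]
    linarith [h _ w hw this]
  have := hpsd.dotProduct_mulVec_nonneg v
  rw [star_trivial, sub_mulVec, smul_mulVec, one_mulVec, dotProduct_sub, dotProduct_smul,
    smul_eq_mul] at this
  linarith

lemma IsHermitian.dotProduct_mulVec_le_mul_dotProduct_self (hA : A.IsHermitian) {c : ℝ}
    (h : ∀ μ : ℝ, ∀ w : ι → ℝ, w ≠ 0 → A *ᵥ w = μ • w → μ ≤ c) (v : ι → ℝ) :
    v ⬝ᵥ A *ᵥ v ≤ c * (v ⬝ᵥ v) := by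
  have := hA.neg.mul_dotProduct_self_le_dotProduct_mulVec (c := -c) (fun μ w hw hμ => by
    rw [neg_mulVec, neg_eq_iff_eq_neg, ← neg_smul] at hμ
    linarith [h _ w hw hμ]) v
  rw [neg_mulVec, dotProduct_neg] at this
  linarith

end Matrix

lemma sq_le_max_sq_of_le_of_le {a b x : ℝ} (ha : a ≤ x) (hb : x ≤ b) :
    x ^ 2 ≤ max (a ^ 2) (b ^ 2) := by
  rcases le_total 0 x with hx | hx
  · exact le_max_of_le_right (pow_le_pow_left₀ hx hb 2)
  · exact le_max_of_le_left (by nlinarith)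

theorem outer_self_add_matrix_eigenvalue_bounds_general
    (n : ℕ)
    (M : Matrix (Fin n) (Fin n) ℝ) (hM : M.IsSymm)
    (μl μu : ℝ)
    (hMev : ∀ μ : ℝ, ∀ w : Fin n → ℝ, w ≠ 0 → M.mulVec w = μ • w → μl ≤ μ ∧ μ ≤ μu)
    (gl gu g : Fin n → ℝ) (hg : ∀ i, gl i ≤ g i ∧ g i ≤ gu i)
    (lam : ℝ) (v : Fin n → ℝ) (hv : v ≠ 0)
    (hev : ((Matrix.of fun i j => g i * g j) + M).mulVec v = lam • v) :
    μl ≤ lam ∧ lam ≤ (∑ i, max ((gl i) ^ 2) ((gu i) ^ 2)) + μu := by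
  have hH : M.IsHermitian := by rwa [IsHermitian, conjTranspose_eq_transpose_of_trivial]
  have hvv : 0 < v ⬝ᵥ v := lt_of_le_of_ne (dotProduct_star_self_nonneg v)
    (Ne.symm (dotProduct_self_eq_zero.not.2 hv))
  have hlam : lam * (v ⬝ᵥ v) = (g ⬝ᵥ v) ^ 2 + v ⬝ᵥ M *ᵥ v := by
    rw [← dotProduct_mulVec_of_mulVec_eq_smul hev, add_mulVec, dotProduct_add]
    exact congrArg (· + _) (dotProduct_vecMulVec_self_mulVec g v)
  have hlow := hH.mul_dotProduct_self_le_dotProduct_mulVec (fun μ w hw h => (hMev μ w hw h).1) v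
  have hupp := hH.dotProduct_mulVec_le_mul_dotProduct_self (fun μ w hw h => (hMev μ w hw h).2) v
  have hgg : g ⬝ᵥ g ≤ ∑ i, max ((gl i) ^ 2) ((gu i) ^ 2) :=
    Finset.sum_le_sum fun i _ => by
      simpa only [← sq] using sq_le_max_sq_of_le_of_le (hg i).1 (hg i).2
  have hcs := dotProduct_sq_le_dotProduct_self_mul_dotProduct_self g v
  have hgg_mul := mul_le_mul_of_nonneg_right hgg hvv.le
  constructor
  · refine le_of_mul_le_mul_right ?_ hvv
    linarith [sq_nonneg (g ⬝ᵥ v)]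
  · refine le_of_mul_le_mul_right ?_ hvv
    linarith

/-- Spectral bound for `g gᵀ + M` given entrywise bounds on `g` and
eigenvalue bounds on the symmetric matrix `M`. -/
theorem outer_self_add_matrix_eigenvalue_bounds
    (n : ℕ) (hn : 0 < n)
    (M : Matrix (Fin n) (Fin n) ℝ) (hM : M.IsSymm)
    (μl μu : ℝ)
    (hMev : ∀ μ : ℝ, ∀ w : Fin n → ℝ, w ≠ 0 → M.mulVec w = μ • w → μl ≤ μ ∧ μ ≤ μu)
    (gl gu g : Fin n → ℝ) (hg : ∀ i, gl i ≤ g i ∧ g i ≤ gu i)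
    (lam : ℝ) (v : Fin n → ℝ) (hv : v ≠ 0)
    (hev : ((Matrix.of fun i j => g i * g j) + M).mulVec v = lam • v) :
    μl ≤ lam ∧ lam ≤ (∑ i, max ((gl i) ^ 2) ((gu i) ^ 2)) + μu :=
  outer_self_add_matrix_eigenvalue_bounds_general n M hM μl μu hMev gl gu g hg lam v hv hev
end
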